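/- arXiv:1603.04199 — 4 statements merged into one kernel-verified Lean document; each statement's English description precedes it below -/
import Mathlib

section
/- Sequential consistency is stronger than causal consistency: for every abstract data type T, every distributed history H that is sequentially consistent with T is also causally consistent with T. -/
/-- An abstract data type: initial state, transition function and output function. -/
structure ADT (Si So Q : Type) where
  q0 : Q
  tr : Q → Si → Q
  out : Q → Si → So

/-- An input symbol is an update if it changes some state. -/
def IsUpdate {Si So Q : Type} (T : ADT Si So Q) (i : Si) : Prop :=
  ∃ q, T.tr q i ≠ q

/-- An input symbol is a query if its output depends on the state. -/
def IsQuery {Si So Q : Type} (T : ADT Si So Q) (i : Si) : Prop :=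
  ∃ q q', T.out q i ≠ T.out q' i

/-- A distributed history: a set of events, labelled by an input symbol together with
an optional output (`none` encodes a hidden operation), and a program order. -/
structure History (E Si So : Type) where
  evts : Set E
  lbl : E → Si × Option So
  po : E → E → Prop

/-- Well-formedness: the program order is a partial order on the events,
in which every event has a finite past. -/
def IsHistory {E Si So : Type} (H : History E Si So) : Prop :=
  (∀ a ∈ H.evts, H.po a a) ∧
  (∀ a ∈ H.evts, ∀ b ∈ H.evts, H.po a b → H.po b a → a = b) ∧
  (∀ a ∈ H.evts, ∀ b ∈ H.evts, ∀ c ∈ H.evts, H.po a b → H.po b c → H.po a c) ∧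
  (∀ e ∈ H.evts, {e' ∈ H.evts | H.po e' e}.Finite)

open Classical in
/-- Projection H.π(E', E''): keep only the events of E', and hide the outputs of the
events that are not in E''. -/
noncomputable def History.proj {E Si So : Type} (H : History E Si So)
    (E' E'' : Set E) : History E Si So where
  evts := E'
  lbl := fun e => if e ∈ E'' then H.lbl e else ((H.lbl e).1, none)
  po := H.po

/-- H^→ : the same history with the program order replaced by another order. -/
def History.withOrder {E Si So : Type} (H : History E Si So)
    (r : E → E → Prop) : History E Si So where
  evts := H.evts
  lbl := H.lbl
  po := r

/-- A causal order on a history: a partial order on its events containing the program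
order, such that every event is in the causal past of all but finitely many events. -/
def IsCausalOrder {E Si So : Type} (H : History E Si So) (r : E → E → Prop) : Prop :=
  (∀ a ∈ H.evts, r a a) ∧
  (∀ a ∈ H.evts, ∀ b ∈ H.evts, r a b → r b a → a = b) ∧
  (∀ a ∈ H.evts, ∀ b ∈ H.evts, ∀ c ∈ H.evts, r a b → r b c → r a c) ∧
  (∀ a ∈ H.evts, ∀ b ∈ H.evts, H.po a b → r a b) ∧
  (∀ e ∈ H.evts, {e' ∈ H.evts | ¬ r e e'}.Finite)

/-- ⌊e⌋ : the causal past of e with respect to the order r. -/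
def causalPast {E Si So : Type} (H : History E Si So)
    (r : E → E → Prop) (e : E) : Set E :=
  {e' ∈ H.evts | r e' e}

/-- lin(H) ∩ L(T) ≠ ∅ : there is a linearization of the events of H, compatible with
the order of H, that is a sequential history admissible for T.  The linearization is
given by an enumeration `s` of the events of H on an initial segment of ℕ, and
admissibility by a run (inputs `inp` and states `q`) of the transition system of T:
at each enumerated position, the input symbol of the label must match, and the
output, when it is not hidden, must match the output function of T. -/
def LinAdm {E Si So Q : Type} (T : ADT Si So Q) (H : History E Si So) : Prop :=
  ∃ s : ℕ → Option E,
    (∀ n, s n = none → s (n + 1) = none) ∧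
    (∀ m n a, s m = some a → s n = some a → m = n) ∧
    (∀ a, a ∈ H.evts ↔ ∃ n, s n = some a) ∧
    (∀ m n a b, m < n → s m = some a → s n = some b → ¬ H.po b a) ∧
    ∃ inp : ℕ → Si, ∃ q : ℕ → Q,
      q 0 = T.q0 ∧
      (∀ n, q (n + 1) = T.tr (q n) (inp n)) ∧
      ∀ n e, s n = some e →
        (H.lbl e).1 = inp n ∧
        ((H.lbl e).2 = none ∨ (H.lbl e).2 = some (T.out (q n) (inp n)))

/-- A process of a history: a maximal chain of the program order. -/
def IsProcess {E Si So : Type} (H : History E Si So) (p : Set E) : Prop :=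
  p ⊆ H.evts ∧
  (∀ a ∈ p, ∀ b ∈ p, H.po a b ∨ H.po b a) ∧
  (∀ p' : Set E, p ⊆ p' → p' ⊆ H.evts →
    (∀ a ∈ p', ∀ b ∈ p', H.po a b ∨ H.po b a) → p' = p)

/-- Sequential consistency. -/
def SC {E Si So Q : Type} (T : ADT Si So Q) (H : History E Si So) : Prop :=
  LinAdm T H

/-- Pipelined consistency. -/
def PC {E Si So Q : Type} (T : ADT Si So Q) (H : History E Si So) : Prop :=
  ∀ p, IsProcess H p → LinAdm T (H.proj H.evts p)

/-- Weak causal consistency. -/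
def WCC {E Si So Q : Type} (T : ADT Si So Q) (H : History E Si So) : Prop :=
  ∃ r, IsCausalOrder H r ∧
    ∀ e ∈ H.evts, LinAdm T ((H.withOrder r).proj (causalPast H r e) {e})

/-- Causal consistency. -/
def CC {E Si So Q : Type} (T : ADT Si So Q) (H : History E Si So) : Prop :=
  ∃ r, IsCausalOrder H r ∧
    ∀ p, IsProcess H p → ∀ e ∈ p,
      LinAdm T ((H.withOrder r).proj (causalPast H r e) p)

/-- Causal convergence. -/
def CCv {E Si So Q : Type} (T : ADT Si So Q) (H : History E Si So) : Prop :=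
  ∃ r le, IsCausalOrder H r ∧
    (∀ a ∈ H.evts, ∀ b ∈ H.evts, r a b → le a b) ∧
    (∀ a ∈ H.evts, le a a) ∧
    (∀ a ∈ H.evts, ∀ b ∈ H.evts, le a b → le b a → a = b) ∧
    (∀ a ∈ H.evts, ∀ b ∈ H.evts, ∀ c ∈ H.evts, le a b → le b c → le a c) ∧
    (∀ a ∈ H.evts, ∀ b ∈ H.evts, le a b ∨ le b a) ∧
    ∀ e ∈ H.evts, LinAdm T ((H.withOrder le).proj (causalPast H r e) {e})

/-- sequential consistency is stronger than causal consistency. -/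
theorem sc_implies_cc
    {E Si So Q : Type} [Countable E] [Countable Si] [Countable So] [Countable Q]
    (T : ADT Si So Q) (H : History E Si So) (hH : IsHistory H)
    (hsc : SC T H) : CC T H := by
  classical
  obtain ⟨s, hnone, hinj, hmem, hord, inp, q, hq0, hqs, hout⟩ := hsc
  set r : E → E → Prop := fun a b =>
    a ∈ H.evts ∧ b ∈ H.evts ∧
      ∀ m n, s m = some a → s n = some b → m ≤ n with hr
  refine ⟨r, ⟨?_, ?_, ?_, ?_, ?_⟩, ?_⟩
  · intro a ha
    exact ⟨ha, ha, fun m n hm hn => le_of_eq (hinj m n a hm hn)⟩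
  · rintro a ha b hb ⟨-, -, hab⟩ ⟨-, -, hba⟩
    obtain ⟨m, hm⟩ := (hmem a).1 ha
    obtain ⟨n, hn⟩ := (hmem b).1 hb
    have hmn : m = n := le_antisymm (hab m n hm hn) (hba n m hn hm)
    rw [hmn] at hm
    exact Option.some_injective _ (hm.symm.trans hn)
  · rintro a ha b hb c hc ⟨-, -, hab⟩ ⟨-, -, hbc⟩
    refine ⟨ha, hc, fun m k hm hk => ?_⟩
    obtain ⟨n, hn⟩ := (hmem b).1 hb
    exact le_trans (hab m n hm hn) (hbc n k hn hk)
  · intro a ha b hb hpo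
    refine ⟨ha, hb, fun m n hm hn => ?_⟩
    by_contra h
    exact hord n m b a (lt_of_not_ge h) hn hm hpo
  · intro e he
    obtain ⟨M, hM⟩ := (hmem e).1 he
    have hfin : (⋃ n ∈ Finset.range M, {e' : E | s n = some e'}).Finite :=
      Set.Finite.biUnion (Finset.range M).finite_toSet fun n _ =>
        Set.Subsingleton.finite fun x hx y hy =>
          Option.some_injective _ (hx.symm.trans hy)
    apply hfin.subset
    rintro e' ⟨he', hne⟩
    have : ∃ m n, s m = some e ∧ s n = some e' ∧ ¬ m ≤ n := by
      by_contra hc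
      push_neg at hc
      exact hne ⟨he, he', fun m n hm hn => hc m n hm hn⟩
    obtain ⟨m, n, hm, hn, hmn⟩ := this
    have hmM : m = M := hinj m M e hm hM
    subst hmM
    exact Set.mem_biUnion (Finset.mem_range.2 (lt_of_not_ge hmn)) hn
  · intro p hp e hep
    have he : e ∈ H.evts := hp.1 hep
    obtain ⟨M, hM⟩ := (hmem e).1 he
    have hs' : ∀ n (a : E), (if n ≤ M then s n else none) = some a →
        n ≤ M ∧ s n = some a := by
      intro n a h
      by_cases hn : n ≤ M
      · exact ⟨hn, by rwa [if_pos hn] at h⟩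
      · rw [if_neg hn] at h; exact absurd h (by simp)
    refine ⟨fun n => if n ≤ M then s n else none, ?_, ?_, ?_, ?_,
      inp, q, hq0, hqs, ?_⟩
    · intro n hn
      show (if n + 1 ≤ M then s (n + 1) else none) = none
      by_cases h : n + 1 ≤ M
      · have h' : n ≤ M := Nat.le_of_succ_le h
        have hn' : s n = none := by
          have : (if n ≤ M then s n else none) = none := hn
          rwa [if_pos h'] at this
        rw [if_pos h]
        exact hnone n hn'
      · rw [if_neg h]
    · intro m n a hm hn
      exact hinj m n a (hs' m a hm).2 (hs' n a hn).2
    · intro a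
      constructor
      · rintro ⟨ha, -, -, har⟩
        obtain ⟨n, hn⟩ := (hmem a).1 ha
        have hnM : n ≤ M := har n M hn hM
        exact ⟨n, show (if n ≤ M then s n else none) = some a by
          rw [if_pos hnM]; exact hn⟩
      · rintro ⟨n, hn⟩
        obtain ⟨h, hn⟩ := hs' n a hn
        have ha : a ∈ H.evts := (hmem a).2 ⟨n, hn⟩
        refine ⟨ha, ha, he, fun m k hm hk => ?_⟩
        rw [hinj m n a hm hn, hinj k M e hk hM]
        exact h
    · intro m n a b hmn hm hn
      rintro ⟨-, -, hba⟩
      exact absurd (hba n m (hs' n b hn).2 (hs' m a hm).2) (not_le.2 hmn)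
    · intro n a hn
      obtain ⟨h, hn⟩ := hs' n a hn
      obtain ⟨h1, h2⟩ := hout n a hn
      show (if a ∈ p then H.lbl a else ((H.lbl a).1, none)).1 = inp n ∧
        ((if a ∈ p then H.lbl a else ((H.lbl a).1, none)).2 = none ∨
         (if a ∈ p then H.lbl a else ((H.lbl a).1, none)).2
            = some (T.out (q n) (inp n)))
      by_cases hap : a ∈ p
      · rw [if_pos hap]; exact ⟨h1, h2⟩
      · rw [if_neg hap]; exact ⟨h1, Or.inl rfl⟩
end

section
/- Sequential consistency is stronger than causal convergence: for every abstract data type T, every distributed history H that is sequentially consistent with T is also causally convergent with T. -/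
/-- sequential consistency is stronger than causal convergence. -/
theorem sc_implies_ccv
    {E Si So Q : Type} [Countable E] [Countable Si] [Countable So] [Countable Q]
    (T : ADT Si So Q) (H : History E Si So) (hH : IsHistory H)
    (hsc : SC T H) : CCv T H := by
  obtain ⟨s, hnone, hinj, hmem, hord, inp, q, hq0, hqstep, hlbl⟩ := hsc
  set le : E → E → Prop := fun a b => ∃ m n : ℕ, m ≤ n ∧ s m = some a ∧ s n = some b with hle
  have hrefl : ∀ a ∈ H.evts, le a a := by
    intro a ha
    obtain ⟨n, hn⟩ := (hmem a).1 ha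
    exact ⟨n, n, le_refl n, hn, hn⟩
  have hantisymm : ∀ a ∈ H.evts, ∀ b ∈ H.evts, le a b → le b a → a = b := by
    rintro a _ b _ ⟨m, n, hmn, hma, hnb⟩ ⟨m', n', hmn', hmb, hna⟩
    have h1 : m = n' := hinj m n' a hma hna
    have h2 : n = m' := hinj n m' b hnb hmb
    have : m = n := le_antisymm hmn (by omega)
    rw [this] at hma
    exact Option.some.inj (hma.symm.trans hnb)
  have htrans : ∀ a ∈ H.evts, ∀ b ∈ H.evts, ∀ c ∈ H.evts, le a b → le b c → le a c := by
    rintro a _ b _ c _ ⟨m, n, hmn, hma, hnb⟩ ⟨m', n', hmn', hmb, hnc⟩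
    have : n = m' := hinj n m' b hnb hmb
    exact ⟨m, n', by omega, hma, hnc⟩
  have htotal : ∀ a ∈ H.evts, ∀ b ∈ H.evts, le a b ∨ le b a := by
    intro a ha b hb
    obtain ⟨m, hm⟩ := (hmem a).1 ha
    obtain ⟨n, hn⟩ := (hmem b).1 hb
    rcases le_total m n with h | h
    · exact Or.inl ⟨m, n, h, hm, hn⟩
    · exact Or.inr ⟨n, m, h, hn, hm⟩
  have hco : IsCausalOrder H le := by
    refine ⟨hrefl, hantisymm, htrans, ?_, ?_⟩
    · intro a ha b hb hpo
      obtain ⟨m, hm⟩ := (hmem a).1 ha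
      obtain ⟨n, hn⟩ := (hmem b).1 hb
      rcases le_or_gt m n with h | h
      · exact ⟨m, n, h, hm, hn⟩
      · exact absurd hpo (hord n m b a h hn hm)
    · intro e he
      obtain ⟨N, hN⟩ := (hmem e).1 he
      have hsub : {e' ∈ H.evts | ¬ le e e'} ⊆ some ⁻¹' (s '' Set.Iio N) := by
        rintro e' ⟨he', hnle⟩
        obtain ⟨n, hn⟩ := (hmem e').1 he'
        have : n < N := by
          by_contra h
          exact hnle ⟨N, n, by omega, hN, hn⟩
        exact ⟨n, this, hn⟩
      exact Set.Finite.subset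
        (((Set.finite_Iio N).image s).preimage (Option.some_injective E).injOn) hsub
  refine ⟨le, le, hco, fun a _ b _ h => h, hrefl, hantisymm, htrans, htotal, ?_⟩
  intro e he
  obtain ⟨N, hN⟩ := (hmem e).1 he
  classical
  set s' : ℕ → Option E := fun n => if n ≤ N then s n else none with hs'
  have hsle : ∀ n, n ≤ N → s' n = s n := by intro n h; simp [hs', h]
  have hsgt : ∀ n, ¬ n ≤ N → s' n = none := by intro n h; simp [hs', h]
  have hssome : ∀ n a, s' n = some a → n ≤ N ∧ s n = some a := by
    intro n a h
    by_cases hn : n ≤ N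
    · exact ⟨hn, by rwa [hsle n hn] at h⟩
    · rw [hsgt n hn] at h; exact absurd h (by simp)
  refine ⟨s', ?_, ?_, ?_, ?_, inp, q, hq0, hqstep, ?_⟩
  · intro n hn
    by_cases h : n + 1 ≤ N
    · rw [hsle (n+1) h]
      by_cases h0 : n ≤ N
      · rw [hsle n h0] at hn; exact hnone n hn
      · omega
    · exact hsgt (n+1) h
  · intro m n a hm hn
    obtain ⟨_, hm⟩ := hssome m a hm
    obtain ⟨_, hn⟩ := hssome n a hn
    exact hinj m n a hm hn
  · intro a
    constructor
    · rintro ⟨ha, m, n, hmn, hma, hne⟩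
      have : n = N := hinj n N e hne hN
      exact ⟨m, by rw [hsle m (by omega)]; exact hma⟩
    · rintro ⟨n, hn⟩
      obtain ⟨h, hn⟩ := hssome n a hn
      exact ⟨(hmem a).2 ⟨n, hn⟩, n, N, h, hn, hN⟩
  · intro m n a b hmn hm hn
    obtain ⟨_, hm⟩ := hssome m a hm
    obtain ⟨_, hn⟩ := hssome n b hn
    rintro ⟨m', n', hmn', hmb, hna⟩
    have e1 : m' = n := hinj m' n b hmb hn
    have e2 : n' = m := hinj n' m a hna hm
    omega
  · intro n e' hn
    obtain ⟨h, hn⟩ := hssome n e' hn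
    obtain ⟨h1, h2⟩ := hlbl n e' hn
    by_cases he' : e' = e
    · subst he'
      constructor
      · simpa [History.proj, History.withOrder] using h1
      · simpa [History.proj, History.withOrder] using h2
    · constructor
      · simpa [History.proj, History.withOrder, he'] using h1
      · simp [History.proj, History.withOrder, he']
end

section
/- Let T be an abstract data type and H = (Σ, E, Λ, ↦) a distributed history with E infinite. Then H is sequentially consistent with T if and only if there exists a causal order → for H such that, for every event e ∈ E, lin((H^→).π(⌊e⌋, ⌊e⌋)) ∩ L(T) ≠ ∅ (i.e. the causal past of every event, with all outputs revealed, admits a linearization in the sequential specification). -/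
/-!
The relation "appears no later than" of an admissible linearization of `H` is a causal order,
and the causal past of an event is then a prefix of the linearization, hence admissible.

Conversely, fix a causal order `r`. Since every event is in the causal past of all but finitely
many events, only finitely many events have a causal past with at most `n` elements. An event
at position `i` of an admissible linearization of a causal past has a causal past with at most
`i + 1` elements, so there are only finitely many "good prefixes" of length `n` (prefixes of such
linearizations), and as `E` is infinite there are good prefixes of every length. Kőnig's lemma
gives an infinite sequence all of whose prefixes are good; it is an admissible linearization of
`H`, and it enumerates every event `a` because `a` lies in the causal past of some enumerated event.
-/

open Set

variable {E Si So Q : Type}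

def ADT.run (T : ADT Si So Q) (inp : ℕ → Si) : ℕ → Q
  | 0 => T.q0
  | n + 1 => T.tr (T.run inp n) (inp n)

theorem ADT.run_congr (T : ADT Si So Q) {inp inp' : ℕ → Si} {n : ℕ}
    (h : ∀ k < n, inp k = inp' k) : T.run inp n = T.run inp' n := by
  induction n with
  | zero => rfl
  | succ n ih => simp only [ADT.run, ih fun k hk => h k (by omega), h n n.lt_succ_self]

theorem ADT.eq_run {T : ADT Si So Q} {inp : ℕ → Si} {q : ℕ → Q} (h0 : q 0 = T.q0)
    (hstep : ∀ n, q (n + 1) = T.tr (q n) (inp n)) : q = T.run inp := by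
  funext n
  induction n with
  | zero => exact h0
  | succ n ih => rw [hstep, ih]; rfl

/-- The witnesses of `LinAdm`, with the run of `T` determined by its inputs. -/
structure IsAdmissibleLin (T : ADT Si So Q) (H : History E Si So) (s : ℕ → Option E) :
    Prop where
  none_succ : ∀ n, s n = none → s (n + 1) = none
  inj : ∀ m n a, s m = some a → s n = some a → m = n
  mem_iff : ∀ a, a ∈ H.evts ↔ ∃ n, s n = some a
  not_po : ∀ m n a b, m < n → s m = some a → s n = some b → ¬ H.po b a
  exists_inp : ∃ inp : ℕ → Si, ∀ n e, s n = some e →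
    (H.lbl e).1 = inp n ∧
      ((H.lbl e).2 = none ∨ (H.lbl e).2 = some (T.out (T.run inp n) (inp n)))

theorem linAdm_iff_exists_isAdmissibleLin {T : ADT Si So Q} {H : History E Si So} :
    LinAdm T H ↔ ∃ s, IsAdmissibleLin T H s := by
  constructor
  · rintro ⟨s, h1, h2, h3, h4, inp, q, h0, hstep, hout⟩
    obtain rfl := ADT.eq_run h0 hstep
    exact ⟨s, ⟨h1, h2, h3, h4, inp, hout⟩⟩
  · rintro ⟨s, h1, h2, h3, h4, inp, hout⟩
    exact ⟨s, h1, h2, h3, h4, inp, T.run inp, rfl, fun _ => rfl, hout⟩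

theorem linAdm_withOrder_proj_self_iff {T : ADT Si So Q} {H : History E Si So}
    {r : E → E → Prop} {P : Set E} :
    LinAdm T ((H.withOrder r).proj P P) ↔
      ∃ s, IsAdmissibleLin T { H with evts := P, po := r } s := by
  have hlbl : ∀ e ∈ P, ((H.withOrder r).proj P P).lbl e = H.lbl e := fun e he => if_pos he
  rw [linAdm_iff_exists_isAdmissibleLin]
  refine exists_congr fun s => ⟨?_, ?_⟩ <;> rintro ⟨h1, h2, h3, h4, inp, hout⟩ <;>
    refine ⟨h1, h2, h3, h4, inp, fun n e hn => ?_⟩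
  · rw [← hlbl e ((h3 e).2 ⟨n, hn⟩)]
    exact hout n e hn
  · rw [hlbl e ((h3 e).2 ⟨n, hn⟩)]
    exact hout n e hn

def Precedes (s : ℕ → Option E) (a b : E) : Prop :=
  ∃ m n, m ≤ n ∧ s m = some a ∧ s n = some b

namespace IsAdmissibleLin

variable {T : ADT Si So Q} {H : History E Si So} {s : ℕ → Option E}

theorem eq_none_of_le (hs : IsAdmissibleLin T H s) {i k : ℕ} (hi : s i = none) (hik : i ≤ k) :
    s k = none := by
  induction k, hik using Nat.le_induction with
  | base => exact hi
  | succ k _ ih => exact hs.none_succ k ih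

theorem ncard_evts_le_of_eq_none (hs : IsAdmissibleLin T H s) {i : ℕ} (hi : s i = none) :
    H.evts.ncard ≤ i := by
  have hmaps : ∀ a ∈ H.evts, some a ∈ s '' Iio i := by
    intro a ha
    obtain ⟨k, hk⟩ := (hs.mem_iff a).1 ha
    refine ⟨k, ?_, hk⟩
    by_contra hki
    simp [hs.eq_none_of_le hi (not_lt.1 hki)] at hk
  calc H.evts.ncard ≤ (s '' Iio i).ncard :=
        ncard_le_ncard_of_injOn some hmaps (Option.some_injective E).injOn
          ((finite_Iio i).image s)
    _ ≤ (Iio i).ncard := ncard_image_le (finite_Iio i)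
    _ = i := ncard_Iio_nat i

theorem isCausalOrder_precedes (hs : IsAdmissibleLin T H s) : IsCausalOrder H (Precedes s) := by
  refine ⟨?_, ?_, ?_, ?_, ?_⟩
  · intro a ha
    obtain ⟨n, hn⟩ := (hs.mem_iff a).1 ha
    exact ⟨n, n, le_rfl, hn, hn⟩
  · rintro a - b - ⟨m, n, hmn, ha, hb⟩ ⟨n', m', hnm, hb', ha'⟩
    obtain rfl := hs.inj _ _ _ ha ha'
    obtain rfl := hs.inj _ _ _ hb hb'
    obtain rfl := le_antisymm hmn hnm
    exact Option.some.inj (ha.symm.trans hb)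
  · rintro a - b - c - ⟨m, n, hmn, ha, hb⟩ ⟨n', k, hnk, hb', hc⟩
    obtain rfl := hs.inj _ _ _ hb hb'
    exact ⟨m, k, hmn.trans hnk, ha, hc⟩
  · intro a ha b hb hpo
    obtain ⟨m, hm⟩ := (hs.mem_iff a).1 ha
    obtain ⟨n, hn⟩ := (hs.mem_iff b).1 hb
    refine ⟨m, n, not_lt.1 fun hnm => hs.not_po n m b a hnm hn hm hpo, hm, hn⟩
  · intro e he
    obtain ⟨N, hN⟩ := (hs.mem_iff e).1 he
    refine (((finite_Iio N).image s).preimage (Option.some_injective E).injOn).subset ?_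
    rintro a ⟨ha, hna⟩
    obtain ⟨n, hn⟩ := (hs.mem_iff a).1 ha
    exact ⟨n, not_le.1 fun hNn => hna ⟨N, n, hNn, hN, hn⟩, hn⟩

theorem truncate (hs : IsAdmissibleLin T H s) {N : ℕ} {e : E} (hN : s N = some e) :
    IsAdmissibleLin T { H with evts := causalPast H (Precedes s) e, po := Precedes s }
      (fun n => if n ≤ N then s n else none) := by
  have htrunc : ∀ n a, (if n ≤ N then s n else none) = some a ↔ n ≤ N ∧ s n = some a :=
    fun _ _ => Option.ite_none_right_eq_some
  obtain ⟨inp, hout⟩ := hs.exists_inp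
  refine ⟨fun n hn => ?_, fun m n a hm hn => hs.inj m n a ((htrunc m a).1 hm).2
    ((htrunc n a).1 hn).2, fun a => ?_, fun m n a b hmn ha hb => ?_, inp,
    fun n e hn => hout n e ((htrunc n e).1 hn).2⟩
  · show (if n + 1 ≤ N then s (n + 1) else none) = none
    split_ifs at hn ⊢ with h1 h2
    · exact hs.none_succ n hn
    · omega
    all_goals rfl
  · simp only [htrunc]
    constructor
    · rintro ⟨-, m, n, hmn, ha, he⟩
      obtain rfl := hs.inj _ _ _ he hN
      exact ⟨m, hmn, ha⟩
    · rintro ⟨m, hmN, ha⟩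
      exact ⟨(hs.mem_iff a).2 ⟨m, ha⟩, m, N, hmN, ha, hN⟩
  · obtain ⟨-, ha⟩ := (htrunc m a).1 ha
    obtain ⟨-, hb⟩ := (htrunc n b).1 hb
    rintro ⟨n', m', hnm, hb', ha'⟩
    obtain rfl := hs.inj _ _ _ ha ha'
    obtain rfl := hs.inj _ _ _ hb hb'
    omega

end IsAdmissibleLin

namespace IsCausalOrder

variable {H : History E Si So} {r : E → E → Prop} {a b c e e' : E}

theorem antisymm (hc : IsCausalOrder H r) (ha : a ∈ H.evts) (hb : b ∈ H.evts) (hab : r a b)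
    (hba : r b a) : a = b :=
  hc.2.1 a ha b hb hab hba

theorem trans (hc : IsCausalOrder H r) (ha : a ∈ H.evts) (hb : b ∈ H.evts) (hc' : c ∈ H.evts)
    (hab : r a b) (hbc : r b c) : r a c :=
  hc.2.2.1 a ha b hb c hc' hab hbc

theorem finite_setOf_not_rel (hc : IsCausalOrder H r) (he : e ∈ H.evts) :
    {e' ∈ H.evts | ¬ r e e'}.Finite :=
  hc.2.2.2.2 e he

theorem mem_causalPast_self (hc : IsCausalOrder H r) (he : e ∈ H.evts) : e ∈ causalPast H r e :=
  ⟨he, hc.1 e he⟩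

theorem causalPast_finite (hc : IsCausalOrder H r) (he : e ∈ H.evts) :
    (causalPast H r e).Finite := by
  refine ((hc.finite_setOf_not_rel he).insert e).subset ?_
  rintro x ⟨hx, hxe⟩
  by_cases hre : r e x
  · exact .inl (hc.antisymm hx he hxe hre)
  · exact .inr ⟨hx, hre⟩

theorem causalPast_ssubset (hc : IsCausalOrder H r) (he : e ∈ H.evts) (he' : e' ∈ H.evts)
    (hr : r e e') (hne : e ≠ e') : causalPast H r e ⊂ causalPast H r e' := by
  refine ssubset_of_subset_of_ne (fun x ⟨hx, hxe⟩ => ⟨hx, hc.trans hx he he' hxe hr⟩) ?_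
  intro heq
  have : r e' e := (heq ▸ hc.mem_causalPast_self he' : e' ∈ causalPast H r e).2
  exact hne (hc.antisymm he he' hr this)

theorem finite_setOf_ncard_causalPast_le (hc : IsCausalOrder H r) (n : ℕ) :
    {e ∈ H.evts | (causalPast H r e).ncard ≤ n}.Finite := by
  induction n with
  | zero =>
    convert finite_empty
    refine eq_empty_of_forall_notMem fun e ⟨he, hle⟩ => ?_
    have := (ncard_pos (hc.causalPast_finite he)).2 ⟨e, hc.mem_causalPast_self he⟩
    omega
  | succ n ih =>
    by_contra hinf
    refine hinf (ih.subset fun e ⟨he, hle⟩ => ⟨he, ?_⟩)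
    -- some event of the infinite level set is strictly above `e`
    obtain ⟨e', ⟨he', hle'⟩, hnot⟩ := Infinite.exists_notMem_finite hinf
      ((hc.finite_setOf_not_rel he).insert e)
    have hr : r e e' := by_contra fun h => hnot (.inr ⟨he', h⟩)
    have hne : e ≠ e' := fun h => hnot (.inl h.symm)
    have := ncard_lt_ncard (hc.causalPast_ssubset he he' hr hne) (hc.causalPast_finite he')
    omega

end IsCausalOrder

section GoodPrefix

variable {T : ADT Si So Q} {H : History E Si So} {r : E → E → Prop}

def IsGoodPrefix (T : ADT Si So Q) (H : History E Si So) (r : E → E → Prop) {n : ℕ}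
    (f : Fin n → E) : Prop :=
  ∃ e ∈ H.evts, ∃ s, IsAdmissibleLin T { H with evts := causalPast H r e, po := r } s ∧
    ∀ i : Fin n, s i = some (f i)

namespace IsGoodPrefix

variable {m n : ℕ} {f : Fin n → E}

theorem castLE (hf : IsGoodPrefix T H r f) (h : m ≤ n) :
    IsGoodPrefix T H r fun i => f (Fin.castLE h i) := by
  obtain ⟨e, he, s, hs, hsf⟩ := hf
  exact ⟨e, he, s, hs, fun i => hsf (Fin.castLE h i)⟩

theorem mem_evts (hf : IsGoodPrefix T H r f) (i : Fin n) : f i ∈ H.evts := by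
  obtain ⟨e, -, s, hs, hsf⟩ := hf
  exact ((hs.mem_iff (f i)).2 ⟨i, hsf i⟩).1

theorem injective (hf : IsGoodPrefix T H r f) : Function.Injective f := by
  obtain ⟨_, -, s, hs, hsf⟩ := hf
  intro i j hij
  exact Fin.ext (hs.inj i j (f i) (hsf i) (hij ▸ hsf j))

theorem not_rel (hf : IsGoodPrefix T H r f) {i j : Fin n} (hij : i < j) : ¬ r (f j) (f i) := by
  obtain ⟨_, -, s, hs, hsf⟩ := hf
  exact hs.not_po i j (f i) (f j) hij (hsf i) (hsf j)

theorem causalPast_subset (hc : IsCausalOrder H r) (hf : IsGoodPrefix T H r f) (i : Fin n) :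
    causalPast H r (f i) ⊆ f '' Iic i := by
  obtain ⟨e, he, s, hs, hsf⟩ := hf
  have hfi : f i ∈ causalPast H r e := (hs.mem_iff (f i)).2 ⟨i, hsf i⟩
  rintro x ⟨hx, hxi⟩
  obtain ⟨k, hk⟩ := (hs.mem_iff x).1 ⟨hx, hc.trans hx hfi.1 he hxi hfi.2⟩
  have hki : k ≤ i := not_lt.1 fun hik => hs.not_po i k (f i) x hik (hsf i) hk hxi
  refine ⟨⟨k, hki.trans_lt i.isLt⟩, hki, Option.some.inj ?_⟩
  rw [← hk, ← hsf]

theorem ncard_causalPast_le (hc : IsCausalOrder H r) (hf : IsGoodPrefix T H r f) (i : Fin n) :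
    (causalPast H r (f i)).ncard ≤ i + 1 :=
  calc (causalPast H r (f i)).ncard ≤ (f '' Iic i).ncard :=
        ncard_le_ncard (hf.causalPast_subset hc i) (toFinite _)
    _ ≤ (Iic i).ncard := ncard_image_le (toFinite _)
    _ = i + 1 := by rw [← Finset.coe_Iic, ncard_coe_finset, Fin.card_Iic]

end IsGoodPrefix

theorem finite_setOf_isGoodPrefix (hc : IsCausalOrder H r) (n : ℕ) :
    {f : Fin n → E | IsGoodPrefix T H r f}.Finite := by
  refine (Finite.pi' fun _ => hc.finite_setOf_ncard_causalPast_le n).subset fun f hf i => ?_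
  exact ⟨hf.mem_evts i, (hf.ncard_causalPast_le hc i).trans i.isLt⟩

theorem exists_isGoodPrefix (hc : IsCausalOrder H r) (hinf : H.evts.Infinite)
    (hlin : ∀ e ∈ H.evts, ∃ s, IsAdmissibleLin T { H with evts := causalPast H r e, po := r } s)
    (n : ℕ) : ∃ f : Fin n → E, IsGoodPrefix T H r f := by
  obtain ⟨e, he, hlarge⟩ := hinf.exists_notMem_finite (hc.finite_setOf_ncard_causalPast_le n)
  obtain ⟨s, hs⟩ := hlin e he
  have hsome : ∀ i : Fin n, ∃ a, s i = some a := by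
    intro i
    by_contra! hnone
    have := hs.ncard_evts_le_of_eq_none (Option.eq_none_iff_forall_ne_some.2 hnone)
    exact hlarge ⟨he, by simp only at this; omega⟩
  choose f hf using hsome
  exact ⟨f, e, he, s, hs, hf⟩

theorem exists_seq_isGoodPrefix (hc : IsCausalOrder H r) (hinf : H.evts.Infinite)
    (hlin : ∀ e ∈ H.evts, ∃ s, IsAdmissibleLin T { H with evts := causalPast H r e, po := r } s) :
    ∃ g : ℕ → E, ∀ n, IsGoodPrefix T H r fun i : Fin n => g i := by
  let α (n : ℕ) := {f : Fin n → E // IsGoodPrefix T H r f}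
  have : ∀ n, Finite (α n) := fun n => (finite_setOf_isGoodPrefix hc n).to_subtype
  have : ∀ n, Nonempty (α n) := fun n =>
    let ⟨f, hf⟩ := exists_isGoodPrefix hc hinf hlin n
    ⟨⟨f, hf⟩⟩
  obtain ⟨F, hF⟩ := exists_seq_forall_proj_of_forall_finite (α := α)
    (fun h f => ⟨fun i => f.1 (Fin.castLE h i), f.2.castLE h⟩) (fun _ _ => rfl)
    (fun _ _ _ _ _ _ => rfl) (fun _ _ => toFinite _)
  refine ⟨fun k => (F (k + 1)).1 (Fin.last k), fun n => ?_⟩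
  convert (F n).2 using 1
  funext i
  show (F (i + 1)).1 (Fin.last i) = (F n).1 i
  rw [← hF (i.isLt : i.1 + 1 ≤ n)]
  rfl

theorem IsGoodPrefix.lbl_snd_eq_none_or_eq_out {g : ℕ → E} {n : ℕ}
    (hg : IsGoodPrefix T H r fun i : Fin (n + 1) => g i) :
    (H.lbl (g n)).2 = none ∨
      (H.lbl (g n)).2 = some (T.out (T.run (fun k => (H.lbl (g k)).1) n) (H.lbl (g n)).1) := by
  obtain ⟨e, -, s, hs, hsg⟩ := hg
  obtain ⟨inp, hout⟩ := hs.exists_inp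
  have hinp : ∀ k ≤ n, inp k = (H.lbl (g k)).1 := fun k hk =>
    ((hout k (g k) (hsg ⟨k, Nat.lt_succ_of_le hk⟩)).1).symm
  rw [← T.run_congr fun k hk => hinp k hk.le, ← hinp n le_rfl]
  exact (hout n (g n) (hsg (Fin.last n))).2

theorem isAdmissibleLin_of_forall_isGoodPrefix (hc : IsCausalOrder H r) {g : ℕ → E}
    (hg : ∀ n, IsGoodPrefix T H r fun i : Fin n => g i) :
    IsAdmissibleLin T H fun n => some (g n) := by
  have hmem : ∀ n, g n ∈ H.evts := fun n => (hg (n + 1)).mem_evts (Fin.last n)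
  have hinj : Function.Injective g := fun m n hmn =>
    congrArg Fin.val ((hg (max m n + 1)).injective
      (a₁ := ⟨m, by omega⟩) (a₂ := ⟨n, by omega⟩) hmn)
  refine ⟨fun _ h => (Option.some_ne_none _ h).elim,
    fun m n a hm hn => hinj (Option.some.inj (hm.trans hn.symm)), fun a => ⟨fun ha => ?_, ?_⟩,
    fun m n a b hmn ha hb hpo => ?_, fun n => (H.lbl (g n)).1, fun n e hn => ?_⟩
  · obtain ⟨_, ⟨n, rfl⟩, hn⟩ := (infinite_range_of_injective hinj).exists_notMem_finite
      (hc.finite_setOf_not_rel ha)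
    have hra : r a (g n) := by_contra fun h => hn ⟨hmem n, h⟩
    obtain ⟨k, -, hk⟩ := (hg (n + 1)).causalPast_subset hc (Fin.last n) ⟨ha, hra⟩
    exact ⟨k, congrArg some hk⟩
  · rintro ⟨n, hn⟩
    exact Option.some.inj hn ▸ hmem n
  · obtain rfl := Option.some.inj ha
    obtain rfl := Option.some.inj hb
    exact (hg (n + 1)).not_rel (i := ⟨m, by omega⟩) (j := Fin.last n) hmn
      (hc.2.2.2.1 _ (hmem n) _ (hmem m) hpo)
  · obtain rfl := Option.some.inj hn
    exact ⟨rfl, (hg (n + 1)).lbl_snd_eq_none_or_eq_out⟩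

end GoodPrefix

theorem sc_iff_causal_past_linearizable_general
    {E Si So Q : Type}
    (T : ADT Si So Q) (H : History E Si So)
    (hinf : H.evts.Infinite) :
    SC T H ↔ ∃ r, IsCausalOrder H r ∧
      ∀ e ∈ H.evts,
        LinAdm T ((H.withOrder r).proj (causalPast H r e) (causalPast H r e)) := by
  simp only [linAdm_withOrder_proj_self_iff]
  rw [SC, linAdm_iff_exists_isAdmissibleLin]
  constructor
  · rintro ⟨s, hs⟩
    refine ⟨Precedes s, hs.isCausalOrder_precedes, fun e he => ?_⟩
    obtain ⟨N, hN⟩ := (hs.mem_iff e).1 he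
    exact ⟨_, hs.truncate hN⟩
  · rintro ⟨r, hc, hlin⟩
    obtain ⟨g, hg⟩ := exists_seq_isGoodPrefix hc hinf hlin
    exact ⟨_, isAdmissibleLin_of_forall_isGoodPrefix hc hg⟩

/-- for an infinite history H, sequential consistency with T is
equivalent to the existence of a causal order r such that, for every event e, the
causal past of e with all outputs revealed admits a linearization in L(T). -/
theorem sc_iff_causal_past_linearizable
    {E Si So Q : Type} [Countable E] [Countable Si] [Countable So] [Countable Q]
    (T : ADT Si So Q) (H : History E Si So) (hH : IsHistory H)
    (hinf : H.evts.Infinite) :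
    SC T H ↔ ∃ r, IsCausalOrder H r ∧
      ∀ e ∈ H.evts,
        LinAdm T ((H.withOrder r).proj (causalPast H r e) (causalPast H r e)) :=
  sc_iff_causal_past_linearizable_general T H hinf
end

section
/- A sequentially consistent window stream of size k solves consensus among k processes: let W_k be the window stream ADT of size k and H a distributed history whose event set consists of exactly 2k events distributed over k processes p_1, …, p_k, where process p_i performs the write event labelled w(v_i)/⊥ followed (in program order) by a read event labelled r/q_i, with every written value v_i ≥ 1. If H is sequentially consistent with W_k, then there exists an index j ∈ {1, …, k} such that, for every i, the first nonzero component of the tuple q_i ∈ ℕ^k equals v_j; in particular all processes obtain the same value, and this value was written by some process. -/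
/-- Operations of the window stream ADT. -/
inductive WOp : Type
  | read
  | write (v : ℕ)

/-- The integer window stream ADT of size k.
Outputs: `some q` is the k-tuple q, `none` is ⊥. -/
def WStream (k : ℕ) : ADT WOp (Option (Fin k → ℕ)) (Fin k → ℕ) where
  q0 := fun _ => 0
  tr := fun q op => match op with
    | .read => q
    | .write v => fun i => if h : (i : ℕ) + 1 < k then q ⟨(i : ℕ) + 1, h⟩ else v
  out := fun q op => match op with
    | .read => some q
    | .write _ => none

/-!
Starting from `(0, …, 0)`, after `c ≤ k` writes the state of `W_k` is `(0, …, 0, u₁, …, u_c)`,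
where `u₁` is the value of the first write of the run. In a linearization witnessing sequential
consistency, each read comes after the write of its own process and there are only `k` writes,
so every read sees between `1` and `k` writes; as written values are nonzero, the first nonzero
entry of every tuple read is `u₁`, the value written by whichever process was linearized first.
-/

namespace WOp

def isWrite : WOp → Bool
  | read => false
  | write _ => true

end WOp

def writeCount (inp : ℕ → WOp) : ℕ → ℕ :=
  Nat.count fun j => (inp j).isWrite

theorem Nat.count_le_of_forall_mem_range {p : ℕ → Prop} [DecidablePred p] {n k : ℕ}
    {f : Fin k → ℕ} (h : ∀ m < n, p m → m ∈ Set.range f) : Nat.count p n ≤ k := by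
  rw [Nat.count_eq_card_filter_range]
  calc _ ≤ (Finset.univ.image f).card := Finset.card_le_card fun m hm => by
          rw [Finset.mem_filter, Finset.mem_range] at hm
          obtain ⟨i, rfl⟩ := h m hm.1 hm.2
          exact Finset.mem_image_of_mem f (Finset.mem_univ i)
    _ ≤ k := Finset.card_image_le.trans (by simp)

theorem exists_first_ne_zero_of_window {k c u : ℕ} {t : Fin k → ℕ} (hc : 0 < c) (hck : c ≤ k)
    (hu : u ≠ 0) (hzero : ∀ m : Fin k, m + c < k → t m = 0)
    (hval : ∀ m : Fin k, m + c = k → t m = u) :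
    ∃ m : Fin k, (∀ m' : Fin k, m' < m → t m' = 0) ∧ t m ≠ 0 ∧ t m = u := by
  have hm : k - c < k := by omega
  have htm : t ⟨k - c, hm⟩ = u := hval _ (by simp only; omega)
  refine ⟨⟨k - c, hm⟩, fun m' hm' => hzero m' ?_, htm ▸ hu, htm⟩
  rw [Fin.lt_def] at hm'
  simp only at hm'
  omega

section WindowRun

variable {k : ℕ} {inp : ℕ → WOp} {qs : ℕ → Fin k → ℕ}

theorem WStream.tr_write_apply (t : Fin k → ℕ) (x : ℕ) (m : Fin k) :
    (WStream k).tr t (.write x) m = if h : (m : ℕ) + 1 < k then t ⟨m + 1, h⟩ else x :=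
  rfl

theorem WStream.run_window (h0 : qs 0 = (WStream k).q0)
    (hstep : ∀ n, qs (n + 1) = (WStream k).tr (qs n) (inp n)) {n₀ u : ℕ}
    (hn₀ : inp n₀ = .write u) (hfirst : writeCount inp n₀ = 0) (n : ℕ) (m : Fin k) :
    (m + writeCount inp n < k → qs n m = 0) ∧ (m + writeCount inp n = k → qs n m = u) := by
  induction n generalizing m with
  | zero =>
    refine ⟨fun _ => by rw [h0]; rfl, fun hm => ?_⟩
    simp only [writeCount, Nat.count_zero, add_zero] at hm
    exact absurd hm m.isLt.ne
  | succ n ih =>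
    cases hn : inp n with
    | read =>
      have hc : writeCount inp (n + 1) = writeCount inp n := by
        rw [writeCount, Nat.count_succ, hn]
        rfl
      rw [hc, hstep, hn]
      exact ih m
    | write x =>
      have hc : writeCount inp (n + 1) = writeCount inp n + 1 := by
        rw [writeCount, Nat.count_succ, hn]
        rfl
      rw [hc, hstep, hn, WStream.tr_write_apply]
      constructor
      · intro hm
        rw [dif_pos (by omega)]
        exact (ih _).1 (by simp only; omega)
      · intro hm
        by_cases hc0 : writeCount inp n = 0
        · rw [dif_neg (by omega)]
          have hnn₀ : n = n₀ := Nat.count_injective (by simp [hn, WOp.isWrite])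
            (by simp [hn₀, WOp.isWrite]) (hc0.trans hfirst.symm)
          subst hnn₀
          simpa [hn] using hn₀
        · rw [dif_pos (by omega)]
          exact (ih _).2 (by simp only; omega)

theorem WStream.exists_common_first_ne_zero_of_run (hk : 0 < k) (h0 : qs 0 = (WStream k).q0)
    (hstep : ∀ n, qs (n + 1) = (WStream k).tr (qs n) (inp n)) {v pw pr : Fin k → ℕ}
    (hv : ∀ i, 1 ≤ v i) (hlt : ∀ i, pw i < pr i) (hw : ∀ i, inp (pw i) = .write (v i))
    (hwrites : ∀ i n, n < pr i → (inp n).isWrite → n ∈ Set.range pw) :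
    ∃ j, ∀ i, ∃ m : Fin k,
      (∀ m' : Fin k, m' < m → qs (pr i) m' = 0) ∧ qs (pr i) m ≠ 0 ∧ qs (pr i) m = v j := by
  have hwr : ∀ i, (inp (pw i)).isWrite := fun i => by simp [hw i, WOp.isWrite]
  have hex : ∃ n, (inp n).isWrite := ⟨_, hwr ⟨0, hk⟩⟩
  classical
  obtain ⟨j, hj⟩ := hwrites ⟨0, hk⟩ (Nat.find hex)
    ((Nat.find_min' hex (hwr _)).trans_lt (hlt _)) (Nat.find_spec hex)
  have hfirst : writeCount inp (pw j) = 0 :=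
    Nat.count_iff_forall_not.2 fun m hm => Nat.find_min hex (hj ▸ hm)
  refine ⟨j, fun i => ?_⟩
  have hwin := WStream.run_window h0 hstep (hw j) hfirst (pr i)
  exact exists_first_ne_zero_of_window
    ((Nat.zero_le _).trans_lt (Nat.count_strict_mono (hwr i) (hlt i)))
    (Nat.count_le_of_forall_mem_range (hwrites i)) (Nat.one_le_iff_ne_zero.1 (hv j))
    (fun m => (hwin m).1) (fun m => (hwin m).2)

end WindowRun

theorem exists_eq_some_of_le {α : Type*} {s : ℕ → Option α}
    (hnone : ∀ n, s n = none → s (n + 1) = none) {m n : ℕ} (hmn : m ≤ n) {a : α}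
    (ha : s n = some a) : ∃ b, s m = some b := by
  refine Option.ne_none_iff_exists'.1 fun hm => ?_
  have : s n = none := Nat.le_induction hm (fun n _ ih => hnone n ih) n hmn
  simp [this] at ha

theorem lt_of_po_of_ne {E : Type*} {s : ℕ → Option E} {po : E → E → Prop}
    (hord : ∀ m n a b, m < n → s m = some a → s n = some b → ¬ po b a) {a b : E} {m n : ℕ}
    (hab : po a b) (hne : a ≠ b) (ha : s m = some a) (hb : s n = some b) : m < n := by
  rcases lt_trichotomy m n with h | rfl | h
  · exact h
  · exact absurd (Option.some.inj (ha.symm.trans hb)) hne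
  · exact absurd hab (hord _ _ _ _ h hb ha)

theorem window_stream_consensus_general
    {E : Type} (k : ℕ) (hk : 0 < k)
    (w rd : Fin k → E) (v : Fin k → ℕ) (q : Fin k → Fin k → ℕ)
    (hwrd : ∀ i j, w i ≠ rd j)
    (hv : ∀ i, 1 ≤ v i)
    (H : History E WOp (Option (Fin k → ℕ)))
    (hevts : H.evts = Set.range w ∪ Set.range rd)
    (hlblw : ∀ i, H.lbl (w i) = (WOp.write (v i), some none))
    (hlblr : ∀ i, H.lbl (rd i) = (WOp.read, some (some (q i))))
    (hpo : ∀ a b, H.po a b ↔ ((a = b ∧ a ∈ H.evts) ∨ ∃ i, a = w i ∧ b = rd i))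
    (hsc : SC (WStream k) H) :
    ∃ j : Fin k, ∀ i : Fin k, ∃ m : Fin k,
      (∀ m' : Fin k, m' < m → q i m' = 0) ∧ q i m ≠ 0 ∧ q i m = v j := by
  obtain ⟨s, hnone, hinj, hmem, hord, inp, qs, hq0, hqs, hlbl⟩ := hsc
  have hpos : ∀ e ∈ Set.range w ∪ Set.range rd, ∃ n, s n = some e :=
    fun e he => (hmem e).1 (hevts ▸ he)
  choose pw hpw using fun i => hpos (w i) (Or.inl ⟨i, rfl⟩)
  choose pr hpr using fun i => hpos (rd i) (Or.inr ⟨i, rfl⟩)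
  have hinp : ∀ n e, s n = some e → inp n = (H.lbl e).1 := fun n e he => (hlbl n e he).1.symm
  have hlt : ∀ i, pw i < pr i := fun i =>
    lt_of_po_of_ne hord ((hpo _ _).2 (Or.inr ⟨i, rfl, rfl⟩)) (hwrd i i) (hpw i) (hpr i)
  have hwrite : ∀ i, inp (pw i) = .write (v i) := fun i => by rw [hinp _ _ (hpw i), hlblw]
  have hread : ∀ i, qs (pr i) = q i := fun i => by
    simpa [hlblr, hinp _ _ (hpr i), WStream, eq_comm] using (hlbl _ _ (hpr i)).2
  have hwrites : ∀ i n, n < pr i → (inp n).isWrite → n ∈ Set.range pw := by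
    intro i n hn hwr
    obtain ⟨e, he⟩ := exists_eq_some_of_le hnone hn.le (hpr i)
    obtain ⟨i', rfl⟩ | ⟨i', rfl⟩ := hevts ▸ (hmem e).2 ⟨n, he⟩
    · exact ⟨i', hinj _ _ _ (hpw i') he⟩
    · simp [hinp _ _ he, hlblr, WOp.isWrite] at hwr
  obtain ⟨j, hj⟩ := WStream.exists_common_first_ne_zero_of_run hk hq0 hqs hv hlt hwrite hwrites
  exact ⟨j, fun i => hread i ▸ hj i⟩

/-- a sequentially consistent window stream of size k solves consensus
among k processes: each process i writes v i ≥ 1 and then reads a k-tuple q i; if the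
history is sequentially consistent with W_k, then there is a j such that the first
nonzero component of every q i equals v j. -/
theorem window_stream_consensus
    {E : Type} [Countable E] (k : ℕ) (hk : 0 < k)
    (w rd : Fin k → E) (v : Fin k → ℕ) (q : Fin k → Fin k → ℕ)
    (hw : Function.Injective w) (hrd : Function.Injective rd)
    (hwrd : ∀ i j, w i ≠ rd j)
    (hv : ∀ i, 1 ≤ v i)
    (H : History E WOp (Option (Fin k → ℕ)))
    (hevts : H.evts = Set.range w ∪ Set.range rd)
    (hlblw : ∀ i, H.lbl (w i) = (WOp.write (v i), some none))
    (hlblr : ∀ i, H.lbl (rd i) = (WOp.read, some (some (q i))))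
    (hpo : ∀ a b, H.po a b ↔ ((a = b ∧ a ∈ H.evts) ∨ ∃ i, a = w i ∧ b = rd i))
    (hsc : SC (WStream k) H) :
    ∃ j : Fin k, ∀ i : Fin k, ∃ m : Fin k,
      (∀ m' : Fin k, m' < m → q i m' = 0) ∧ q i m ≠ 0 ∧ q i m = v j :=
  window_stream_consensus_general k hk w rd v q hwrd hv H hevts hlblw hlblr hpo hsc
end
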